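/- For ρ > 1/δ, the one-dimensional augmented Lagrangian sub-problem min_γ [ p_δ(|γ|, λ) + (ρ/2)(γ − c)² ] has the closed-form minimizer γ̂ = ST(c, λ/ρ)/(1 − 1/(δρ)) if |c| ≤ δλ, and γ̂ = c if |c| > δλ, where ST(c, a) = sign(c)(|c| − a)₊ is the soft-thresholding operator. -/

import Mathlib

/-!
On `|t| ≤ δλ` the penalty is `λ|t| - t²/(2δ)`, and everywhere it equals
`δλ²/2 - (δλ - |t|)₊²/(2δ)`, which lies above that branch. For `|c| ≤ δλ` the objective therefore
dominates `λ|γ| - γ²/(2δ) + ρ(γ - c)²/2`, which is convex because `ρ > 1/δ`; completing the square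
shows that its minimiser is the rescaled soft threshold, which lies in `|γ| ≤ δλ` where the two
functions agree. For `|c| > δλ`, the choice `γ = c` attains the maximal penalty `δλ²/2` at no
quadratic cost, while any other `γ` saves at most `(δλ - |γ|)₊²/(2δ) ≤ (γ - c)²/(2δ)` in penalty.
-/

noncomputable def mcp (δ lam t : ℝ) : ℝ :=
  lam * ∫ x in (0:ℝ)..|t|, max (1 - x / (δ * lam)) 0

/-- Soft-thresholding operator `ST(c,a) = sign(c)(|c|−a)₊`. -/
noncomputable def softThreshold (c a : ℝ) : ℝ := Real.sign c * max (|c| - a) 0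

theorem softThreshold_mul {k : ℝ} (hk : 0 < k) (c a : ℝ) :
    softThreshold (k * c) (k * a) = k * softThreshold c a := by
  have hsign : Real.sign (k * c) = Real.sign c := by
    rcases lt_trichotomy c 0 with h | rfl | h
    · rw [Real.sign_of_neg h, Real.sign_of_neg (mul_neg_of_pos_of_neg hk h)]
    · rw [mul_zero]
    · rw [Real.sign_of_pos h, Real.sign_of_pos (mul_pos hk h)]
  rw [softThreshold, softThreshold, hsign, abs_mul, abs_of_pos hk, ← mul_sub,
    ← mul_zero k, ← mul_max_of_nonneg _ _ hk.le, mul_zero]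
  ring

theorem abs_softThreshold_le (c a : ℝ) : |softThreshold c a| ≤ max (|c| - a) 0 := by
  rw [softThreshold, abs_mul, abs_of_nonneg (le_max_right (|c| - a) 0)]
  refine mul_le_of_le_one_left (le_max_right _ _) ?_
  rcases Real.sign_apply_eq c with h | h | h <;> simp [h]

theorem mul_abs_softThreshold_add_sq_le {a : ℝ} (ha : 0 ≤ a) (c γ : ℝ) :
    a * |softThreshold c a| + (softThreshold c a - c) ^ 2 / 2 ≤ a * |γ| + (γ - c) ^ 2 / 2 := by
  rcases le_or_gt |c| a with hc | hc
  · have hzero : softThreshold c a = 0 := by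
      rw [softThreshold, max_eq_right (by linarith), mul_zero]
    have hcross : γ * c ≤ a * |γ| :=
      calc γ * c ≤ |γ| * |c| := (le_abs_self _).trans (abs_mul γ c).le
        _ ≤ a * |γ| := by rw [mul_comm]; exact mul_le_mul_of_nonneg_right hc (abs_nonneg γ)
    rw [hzero]
    nlinarith [sq_nonneg γ]
  rcases lt_abs.mp hc with hpos | hneg
  · have hst : softThreshold c a = c - a := by
      rw [softThreshold, Real.sign_of_pos (by linarith), abs_of_pos (by linarith),
        max_eq_left (by linarith), one_mul]
    rw [hst, abs_of_pos (by linarith)]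
    nlinarith [le_abs_self γ, sq_nonneg (γ - c + a)]
  · have hst : softThreshold c a = c + a := by
      rw [softThreshold, Real.sign_of_neg (by linarith), abs_of_neg (by linarith),
        max_eq_left (by linarith)]
      ring
    rw [hst, abs_of_neg (by linarith)]
    nlinarith [neg_abs_le γ, sq_nonneg (γ - c - a)]

section Integral

variable {a : ℝ}

theorem integral_max_one_sub_div_of_le (ha : 0 < a) {s : ℝ} (hs₀ : 0 ≤ s) (hs : s ≤ a) :
    ∫ x in (0:ℝ)..s, max (1 - x / a) 0 = s - s ^ 2 / (2 * a) := by
  have hpos : ∀ x ∈ Set.uIcc 0 s, max (1 - x / a) 0 = 1 - x / a := fun x hx => by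
    rw [Set.uIcc_of_le hs₀] at hx
    exact max_eq_left (by linarith [(div_le_one ha).2 (hx.2.trans hs)])
  rw [intervalIntegral.integral_congr hpos, intervalIntegral.integral_sub intervalIntegrable_const
    ((by fun_prop : Continuous fun x : ℝ => x / a).intervalIntegrable _ _),
    intervalIntegral.integral_div, integral_id]
  simp only [intervalIntegral.integral_const, sub_zero, smul_eq_mul, mul_one]
  field_simp
  ring

theorem integral_max_one_sub_div_of_ge (ha : 0 < a) {s : ℝ} (hs : a ≤ s) :
    ∫ x in (0:ℝ)..s, max (1 - x / a) 0 = a / 2 := by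
  have hcont : Continuous fun x : ℝ => max (1 - x / a) 0 := by fun_prop
  have htail : ∀ x ∈ Set.uIcc a s, max (1 - x / a) 0 = 0 := fun x hx => by
    rw [Set.uIcc_of_le hs] at hx
    exact max_eq_right (by linarith [(one_le_div ha).2 hx.1])
  rw [← intervalIntegral.integral_add_adjacent_intervals (b := a) (hcont.intervalIntegrable _ _)
    (hcont.intervalIntegrable _ _), integral_max_one_sub_div_of_le ha ha.le le_rfl,
    intervalIntegral.integral_congr htail, intervalIntegral.integral_zero]
  field_simp
  ring

theorem integral_max_one_sub_div (ha : 0 < a) {s : ℝ} (hs : 0 ≤ s) :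
    ∫ x in (0:ℝ)..s, max (1 - x / a) 0 = a / 2 - max (a - s) 0 ^ 2 / (2 * a) := by
  rcases le_total s a with hsa | hsa
  · rw [integral_max_one_sub_div_of_le ha hs hsa, max_eq_left (by linarith)]
    field_simp
    ring
  · rw [integral_max_one_sub_div_of_ge ha hsa, max_eq_right (by linarith)]
    ring

end Integral

section MCP

variable {δ lam : ℝ}

theorem mcp_eq (hδ : 0 < δ) (hlam : 0 < lam) (t : ℝ) :
    mcp δ lam t = δ * lam ^ 2 / 2 - max (δ * lam - |t|) 0 ^ 2 / (2 * δ) := by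
  rw [mcp, integral_max_one_sub_div (by positivity) (abs_nonneg t)]
  field_simp

theorem mcp_eq_of_abs_le (hδ : 0 < δ) (hlam : 0 < lam) {t : ℝ} (ht : |t| ≤ δ * lam) :
    mcp δ lam t = lam * |t| - t ^ 2 / (2 * δ) := by
  rw [mcp_eq hδ hlam, max_eq_left (by linarith), ← sq_abs t]
  field_simp
  ring

theorem le_mcp (hδ : 0 < δ) (hlam : 0 < lam) (t : ℝ) :
    lam * |t| - t ^ 2 / (2 * δ) ≤ mcp δ lam t := by
  have hmax : max (δ * lam - |t|) 0 ^ 2 ≤ (δ * lam - |t|) ^ 2 := by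
    rcases le_total (δ * lam - |t|) 0 with h | h
    · rw [max_eq_right h, sq, zero_mul]; positivity
    · rw [max_eq_left h]
  have hid : lam * |t| - t ^ 2 / (2 * δ) = δ * lam ^ 2 / 2 - (δ * lam - |t|) ^ 2 / (2 * δ) := by
    rw [← sq_abs t]; field_simp; ring
  rw [mcp_eq hδ hlam, hid]
  gcongr

end MCP

section ThresholdRule

variable {δ lam ρ : ℝ}

theorem mcp_branch_add_sq_le_of_softThreshold (hδ : 0 < δ) (hlam : 0 ≤ lam) (hρ : 1 / δ < ρ)
    {c g : ℝ} (hg : g = softThreshold c (lam / ρ) / (1 - 1 / (δ * ρ))) (γ : ℝ) :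
    lam * |g| - g ^ 2 / (2 * δ) + ρ / 2 * (g - c) ^ 2
      ≤ lam * |γ| - γ ^ 2 / (2 * δ) + ρ / 2 * (γ - c) ^ 2 := by
  have hρ₀ : 0 < ρ := (by positivity : (0:ℝ) < 1 / δ).trans hρ
  set A := ρ - 1 / δ with hA_def
  have hA : 0 < A := sub_pos.mpr hρ
  -- completing the square: the objective is `A (lam/A |x| + (x - ρc/A)²/2)` up to a constant
  have hsq : ∀ x, lam * |x| - x ^ 2 / (2 * δ) + ρ / 2 * (x - c) ^ 2
      = A * (lam / A * |x| + (x - ρ / A * c) ^ 2 / 2) + (ρ / 2 - ρ ^ 2 / (2 * A)) * c ^ 2 := by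
    intro x
    rw [show x ^ 2 / (2 * δ) = 1 / δ / 2 * x ^ 2 by ring,
      show 1 / δ = ρ - A by rw [hA_def]; ring]
    field_simp
    ring
  have hg' : g = softThreshold (ρ / A * c) (lam / A) := by
    rw [show lam / A = ρ / A * (lam / ρ) by field_simp, softThreshold_mul (by positivity), hg,
      hA_def]
    field_simp
  rw [hsq, hsq, hg']
  exact add_le_add_left
    (mul_le_mul_of_nonneg_left (mul_abs_softThreshold_add_sq_le (by positivity) _ _) hA.le) _

theorem abs_softThreshold_div_le (hδ : 0 < δ) (hlam : 0 ≤ lam) (hρ : 1 / δ < ρ) {c : ℝ}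
    (hc : |c| ≤ δ * lam) :
    |softThreshold c (lam / ρ) / (1 - 1 / (δ * ρ))| ≤ δ * lam := by
  have hρ₀ : 0 < ρ := (by positivity : (0:ℝ) < 1 / δ).trans hρ
  have hδρ : 1 < δ * ρ := by rwa [div_lt_iff₀ hδ, mul_comm] at hρ
  have hden : 0 < 1 - 1 / (δ * ρ) := by
    rw [sub_pos, div_lt_one (by positivity)]; exact hδρ
  have hgap : 0 ≤ δ * lam - lam / ρ := by
    rw [sub_nonneg, div_le_iff₀ hρ₀]; nlinarith
  rw [abs_div, abs_of_pos hden, div_le_iff₀ hden]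
  calc |softThreshold c (lam / ρ)| ≤ max (|c| - lam / ρ) 0 := abs_softThreshold_le _ _
    _ ≤ δ * lam - lam / ρ := max_le (by linarith) hgap
    _ = δ * lam * (1 - 1 / (δ * ρ)) := by field_simp

theorem mcp_le_mcp_add_sq (hδ : 0 < δ) (hlam : 0 < lam) (hρ : 1 / δ ≤ ρ) {c : ℝ}
    (hc : δ * lam ≤ |c|) (γ : ℝ) :
    mcp δ lam c ≤ mcp δ lam γ + ρ / 2 * (γ - c) ^ 2 := by
  have hmax : max (δ * lam - |γ|) 0 ≤ |γ - c| := by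
    refine max_le ?_ (abs_nonneg _)
    linarith [abs_sub_abs_le_abs_sub c γ, abs_sub_comm c γ]
  have hsq : max (δ * lam - |γ|) 0 ^ 2 / (2 * δ) ≤ ρ / 2 * (γ - c) ^ 2 := by
    calc max (δ * lam - |γ|) 0 ^ 2 / (2 * δ) ≤ |γ - c| ^ 2 / (2 * δ) := by gcongr
      _ = 1 / δ / 2 * (γ - c) ^ 2 := by rw [sq_abs]; ring
      _ ≤ ρ / 2 * (γ - c) ^ 2 := by gcongr
  rw [mcp_eq hδ hlam, mcp_eq hδ hlam, max_eq_right (by linarith),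
    zero_pow two_ne_zero, zero_div]
  linarith

end ThresholdRule

/-- MCP thresholding rule: for `ρ > 1/δ` the minimizer of
    `γ ↦ p_δ(|γ|,λ) + (ρ/2)(γ−c)²` is `ST(c,λ/ρ)/(1−1/(δρ))` when `|c| ≤ δλ`
    and `c` when `|c| > δλ`. -/
theorem mcp_threshold_rule (δ lam ρ c : ℝ) (hlam : 0 < lam) (hδ : 1 < δ)
    (hρ : 1 / δ < ρ) :
    ∀ γ : ℝ,
      mcp δ lam (if |c| ≤ δ * lam then softThreshold c (lam / ρ) / (1 - 1 / (δ * ρ)) else c)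
          + ρ / 2 * ((if |c| ≤ δ * lam then softThreshold c (lam / ρ) / (1 - 1 / (δ * ρ)) else c) - c) ^ 2
        ≤ mcp δ lam γ + ρ / 2 * (γ - c) ^ 2 := by
  intro γ
  have hδ₀ : 0 < δ := one_pos.trans hδ
  split_ifs with hc
  · set g := softThreshold c (lam / ρ) / (1 - 1 / (δ * ρ)) with hg
    calc mcp δ lam g + ρ / 2 * (g - c) ^ 2
        = lam * |g| - g ^ 2 / (2 * δ) + ρ / 2 * (g - c) ^ 2 := by
          rw [mcp_eq_of_abs_le hδ₀ hlam (abs_softThreshold_div_le hδ₀ hlam.le hρ hc)]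
      _ ≤ lam * |γ| - γ ^ 2 / (2 * δ) + ρ / 2 * (γ - c) ^ 2 :=
          mcp_branch_add_sq_le_of_softThreshold hδ₀ hlam.le hρ hg γ
      _ ≤ mcp δ lam γ + ρ / 2 * (γ - c) ^ 2 := by gcongr; exact le_mcp hδ₀ hlam γ
  · simpa using mcp_le_mcp_add_sq hδ₀ hlam hρ.le (not_le.mp hc).le γ
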